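/- arXiv:2506.15693 — 3 statements merged into one kernel-verified Lean document; each statement's English description precedes it below -/
import Mathlib

section
/- Let f : ℝ^m → ℝ^n → ℝ^m, h : ℝ^m → ℝ, U ⊆ ℝ^n, and Q : ℝ^m → ℝ^n → ℝ satisfy constraint satisfaction (Q(x,u) ≤ 0 with u ∈ U implies h(x) ≤ 0) and forward invariance (Q(x,u) ≤ 0 with u ∈ U implies there exists u' ∈ U with Q(f(x,u),u') ≤ 0). Define the induced safe control set U_safe(x) = {u ∈ U | Q(x,u) ≤ 0}. Then Q is a valid model-free safety filter: for every x₀ ∈ ℝ^m and u₀ ∈ U with Q(x₀,u₀) < 0, any trajectory (x_t, u_t)_{t∈ℕ} with x_{t+1} = f(x_t,u_t) and u_t ∈ U_safe(x_t) for all t ≥ 0 satisfies h(x_t) ≤ 0 for all t ≥ 0; moreover, along any such trajectory U_safe(x_{t+1}) is nonempty for every t, so the trajectory can always be continued. -/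
/-- Under constraint satisfaction and forward invariance, `Q` is a
valid model-free safety filter: for any `x₀` and `u₀ ∈ U` with `Q x₀ u₀ < 0`, every
trajectory generated by choosing `u t` in the induced safe control set
`U_safe(x) = {u ∈ U | Q x u ≤ 0}` satisfies `h (x t) ≤ 0` for all `t`, and moreover
the safe control set at each next state is nonempty, so the trajectory can always be
continued. -/
theorem model_free_safety_filter
    {m n : ℕ} (U : Set (Fin n → ℝ))
    (f : (Fin m → ℝ) → (Fin n → ℝ) → (Fin m → ℝ))
    (h : (Fin m → ℝ) → ℝ)
    (Q : (Fin m → ℝ) → (Fin n → ℝ) → ℝ)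
    (hcon : ∀ x u, u ∈ U → Q x u ≤ 0 → h x ≤ 0)
    (hinv : ∀ x u, u ∈ U → Q x u ≤ 0 → ∃ u' ∈ U, Q (f x u) u' ≤ 0)
    (Usafe : (Fin m → ℝ) → Set (Fin n → ℝ))
    (hUsafe : ∀ x, Usafe x = {u ∈ U | Q x u ≤ 0}) :
    ∀ x₀ u₀, u₀ ∈ U → Q x₀ u₀ < 0 →
      ∀ (x : ℕ → (Fin m → ℝ)) (u : ℕ → (Fin n → ℝ)),
        x 0 = x₀ → u 0 = u₀ →
        (∀ t, x (t + 1) = f (x t) (u t)) →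
        (∀ t, u t ∈ Usafe (x t)) →
        (∀ t, h (x t) ≤ 0) ∧ (∀ t, (Usafe (x (t + 1))).Nonempty) := by
  intro x₀ u₀ hu₀ hQ₀ x u hx0 hu0 hstep hsafe
  have hmem : ∀ t, u t ∈ U ∧ Q (x t) (u t) ≤ 0 := by
    intro t
    have := hsafe t
    rw [hUsafe] at this
    exact this
  constructor
  · intro t
    exact hcon _ _ (hmem t).1 (hmem t).2
  · intro t
    obtain ⟨u', hu', hQ'⟩ := hinv _ _ (hmem t).1 (hmem t).2
    refine ⟨u', ?_⟩
    rw [hUsafe, hstep t]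
    exact ⟨hu', hQ'⟩
end

section
/- Let f : ℝ^m → ℝ^n → ℝ^m, h : ℝ^m → ℝ be bounded, and U ⊆ ℝ^n be nonempty. For a control sequence u : ℕ → U define the trajectory from x by x₀ = x, x_{t+1} = f(x_t, u_t), and define the value function V(x) = inf over all control sequences u : ℕ → U of sup_{t ∈ ℕ} h(x_t). Then a state x belongs to the maximum safe invariant set S_max (the union of all safe invariant sets) only if V(x) ≤ 0; that is, S_max ⊆ {x ∈ ℝ^m | V(x) ≤ 0}. -/
/-! A state `x` of a safe invariant set `S` is kept in `S` forever by a feedback law that picks,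
at each `y ∈ S`, a control leading back into `S`. Along the resulting trajectory `h ≤ 0`, so the
supremum of `h` over it, and hence `V x`, is nonpositive. -/

/-- Trajectory from `x` under control sequence `u`: `x₀ = x`, `x_{t+1} = f x_t u_t`. -/
def trajectory {m n : ℕ} (f : (Fin m → ℝ) → (Fin n → ℝ) → (Fin m → ℝ))
    (x : Fin m → ℝ) (u : ℕ → (Fin n → ℝ)) : ℕ → (Fin m → ℝ)
  | 0 => x
  | t + 1 => f (trajectory f x u t) (u t)

/-- The Hamilton–Jacobi value function
`V(x) = inf_{u : ℕ → U} sup_{t ∈ ℕ} h (x_t)`. -/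
noncomputable def hjValue {m n : ℕ} (U : Set (Fin n → ℝ))
    (f : (Fin m → ℝ) → (Fin n → ℝ) → (Fin m → ℝ))
    (h : (Fin m → ℝ) → ℝ) (x : Fin m → ℝ) : ℝ :=
  ⨅ u : {u : ℕ → (Fin n → ℝ) // ∀ t, u t ∈ U},
    ⨆ t : ℕ, h (trajectory f x u.1 t)

/-- A set `S` of states is a safe invariant set. -/
def IsSafeInvariantSet {m n : ℕ} (U : Set (Fin n → ℝ))
    (f : (Fin m → ℝ) → (Fin n → ℝ) → (Fin m → ℝ))
    (h : (Fin m → ℝ) → ℝ) (S : Set (Fin m → ℝ)) : Prop :=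
  ∀ x ∈ S, h x ≤ 0 ∧ ∃ u ∈ U, f x u ∈ S

section

variable {m n : ℕ} {U : Set (Fin n → ℝ)} {f : (Fin m → ℝ) → (Fin n → ℝ) → (Fin m → ℝ)}
  {h : (Fin m → ℝ) → ℝ}

theorem trajectory_feedback (c : (Fin m → ℝ) → Fin n → ℝ) (x : Fin m → ℝ) (t : ℕ) :
    trajectory f x (fun s => c ((fun y => f y (c y))^[s] x)) t = (fun y => f y (c y))^[t] x := by
  induction t with
  | zero => rfl
  | succ t ih => rw [trajectory, ih, Function.iterate_succ_apply']

theorem IsSafeInvariantSet.exists_control_trajectory_mem {S : Set (Fin m → ℝ)}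
    (hS : IsSafeInvariantSet U f h S) {x : Fin m → ℝ} (hx : x ∈ S) :
    ∃ u : ℕ → Fin n → ℝ, (∀ t, u t ∈ U) ∧ ∀ t, trajectory f x u t ∈ S := by
  choose! c hcU hcS using fun y hy => (hS y hy).2
  have hmaps : Set.MapsTo (fun y => f y (c y)) S S := hcS
  refine ⟨fun s => c ((fun y => f y (c y))^[s] x), fun t => hcU _ (hmaps.iterate t hx), fun t => ?_⟩
  rw [trajectory_feedback]
  exact hmaps.iterate t hx

theorem hjValue_nonpos_of_trajectory_nonpos {x : Fin m → ℝ} {u : ℕ → Fin n → ℝ}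
    (hu : ∀ t, u t ∈ U) (hux : ∀ t, h (trajectory f x u t) ≤ 0) : hjValue U f h x ≤ 0 :=
  Real.iInf_nonpos' ⟨⟨u, hu⟩, Real.iSup_nonpos hux⟩

end

theorem maxSafeInvariantSet_subset_value_sublevel_general
    {m n : ℕ} (U : Set (Fin n → ℝ))
    (f : (Fin m → ℝ) → (Fin n → ℝ) → (Fin m → ℝ))
    (h : (Fin m → ℝ) → ℝ) :
    ⋃₀ {S | IsSafeInvariantSet U f h S} ⊆ {x | hjValue U f h x ≤ 0} := by
  rintro x ⟨S, hS, hxS⟩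
  obtain ⟨u, hu, hmem⟩ := hS.exists_control_trajectory_mem hxS
  exact hjValue_nonpos_of_trajectory_nonpos hu fun t => (hS _ (hmem t)).1

/-- With `h` bounded and `U` nonempty, the maximum safe invariant set
`S_max = ⋃₀ {S | S is safe invariant}` is contained in the zero-sublevel set of the
Hamilton–Jacobi value function `V`. -/
theorem maxSafeInvariantSet_subset_value_sublevel
    {m n : ℕ} (U : Set (Fin n → ℝ)) (hU : U.Nonempty)
    (f : (Fin m → ℝ) → (Fin n → ℝ) → (Fin m → ℝ))
    (h : (Fin m → ℝ) → ℝ) (hb : ∃ C : ℝ, ∀ x, |h x| ≤ C) :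
    ⋃₀ {S | IsSafeInvariantSet U f h S} ⊆ {x | hjValue U f h x ≤ 0} :=
  maxSafeInvariantSet_subset_value_sublevel_general U f h
end

section
/- Let f : ℝ^m → ℝ^n → ℝ^m, let h : ℝ^m → ℝ be bounded, and let U ⊆ ℝ^n be nonempty. For a control sequence u : ℕ → U define the trajectory from x by x₀ = x, x_{t+1} = f(x_t, u_t), and define V(x) = inf over all control sequences u : ℕ → U of sup_{t ∈ ℕ} h(x_t). Then V satisfies the discrete-time Hamilton–Jacobi–Bellman variational equality: for every x ∈ ℝ^m, V(x) = max{ h(x), inf_{u ∈ U} V(f(x,u)) }. -/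
open Set

theorem ciSup_nat_eq_sup_ciSup_succ {β : Type*} [ConditionallyCompleteLattice β] {g : ℕ → β}
    (hg : BddAbove (range g)) : ⨆ t, g t = g 0 ⊔ ⨆ t, g (t + 1) :=
  le_antisymm
    (ciSup_le fun
      | 0 => le_sup_left
      | t + 1 => le_sup_of_le_right (le_ciSup (hg.mono (range_comp_subset_range _ g)) t))
    (sup_le (le_ciSup hg 0) (ciSup_le fun t => le_ciSup hg (t + 1)))

theorem nonempty_admissible {α : Type*} {U : Set α} (hU : U.Nonempty) :
    Nonempty {u : ℕ → α // ∀ t, u t ∈ U} :=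
  ⟨⟨fun _ => hU.some, fun _ => hU.some_mem⟩⟩

theorem ciInf_head_tail_eq_csInf_image {α β : Type*} [ConditionallyCompleteLattice β]
    {U : Set α} (hU : U.Nonempty) {g : α → (ℕ → α) → β} {b : β} (hb : ∀ a v, b ≤ g a v) :
    ⨅ u : {u : ℕ → α // ∀ t, u t ∈ U}, g (u.1 0) (fun t => u.1 (t + 1)) =
      sInf ((fun a => ⨅ v : {v : ℕ → α // ∀ t, v t ∈ U}, g a v.1) '' U) := by
  have := nonempty_admissible hU
  have hbdd_tail : ∀ a, BddBelow (range fun v : {v : ℕ → α // ∀ t, v t ∈ U} => g a v.1) :=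
    fun a => ⟨b, by rintro _ ⟨v, rfl⟩; exact hb a v.1⟩
  have hbdd_seq : BddBelow (range fun u : {u : ℕ → α // ∀ t, u t ∈ U} =>
      g (u.1 0) (fun t => u.1 (t + 1))) := ⟨b, by rintro _ ⟨u, rfl⟩; exact hb _ _⟩
  have hbdd_head : BddBelow ((fun a => ⨅ v : {v : ℕ → α // ∀ t, v t ∈ U}, g a v.1) '' U) :=
    ⟨b, by rintro _ ⟨a, -, rfl⟩; exact le_ciInf fun v => hb a v.1⟩
  refine le_antisymm (le_csInf (hU.image _) ?_) (le_ciInf fun u => ?_)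
  · rintro _ ⟨a, ha, rfl⟩
    -- `Stream'.cons a v` has head `a` and tail `v` definitionally
    exact le_ciInf fun v => ciInf_le hbdd_seq ⟨Stream'.cons a v.1, fun | 0 => ha | t + 1 => v.2 t⟩
  · exact (csInf_le hbdd_head ⟨u.1 0, u.2 0, rfl⟩).trans
      (ciInf_le (hbdd_tail _) ⟨fun t => u.1 (t + 1), fun t => u.2 (t + 1)⟩)

section

variable {m n : ℕ} (f : (Fin m → ℝ) → (Fin n → ℝ) → (Fin m → ℝ)) (h : (Fin m → ℝ) → ℝ)

theorem trajectory_succ_eq_trajectory_tail (x : Fin m → ℝ) (u : ℕ → (Fin n → ℝ)) (t : ℕ) :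
    trajectory f x u (t + 1) = trajectory f (f x (u 0)) (fun s => u (s + 1)) t := by
  induction t with
  | zero => rfl
  | succ t ih => exact congrArg (f · (u (t + 1))) ih

noncomputable def hjCost (x : Fin m → ℝ) (u : ℕ → (Fin n → ℝ)) : ℝ :=
  ⨆ t, h (trajectory f x u t)

variable {h}

theorem hjCost_eq_max (hh : BddAbove (range h)) (x : Fin m → ℝ) (u : ℕ → (Fin n → ℝ)) :
    hjCost f h x u = max (h x) (hjCost f h (f x (u 0)) (fun t => u (t + 1))) := by
  simp only [hjCost, ← trajectory_succ_eq_trajectory_tail]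
  exact ciSup_nat_eq_sup_ciSup_succ (hh.mono (range_comp_subset_range _ h))

theorem le_hjCost (hh : BddAbove (range h)) (x : Fin m → ℝ) (u : ℕ → (Fin n → ℝ)) :
    h x ≤ hjCost f h x u :=
  (hjCost_eq_max f hh x u).symm ▸ le_max_left _ _

end

/-- With `h` bounded and `U` nonempty, the Hamilton–Jacobi value
function satisfies the discrete-time HJB variational equality
`V(x) = max { h(x), inf_{u ∈ U} V (f x u) }`. -/
theorem hjValue_satisfies_hjb_equality
    {m n : ℕ} (U : Set (Fin n → ℝ)) (hU : U.Nonempty)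
    (f : (Fin m → ℝ) → (Fin n → ℝ) → (Fin m → ℝ))
    (h : (Fin m → ℝ) → ℝ) (hb : ∃ C : ℝ, ∀ x, |h x| ≤ C) :
    ∀ x : Fin m → ℝ,
      hjValue U f h x = max (h x) (sInf ((fun u => hjValue U f h (f x u)) '' U)) := by
  intro x
  obtain ⟨C, hC⟩ := hb
  have hh : BddAbove (range h) := ⟨C, by rintro _ ⟨y, rfl⟩; exact (abs_le.1 (hC y)).2⟩
  have hcost_ge : ∀ y u, -C ≤ hjCost f h y u := fun y u =>
    (abs_le.1 (hC y)).1.trans (le_hjCost f hh y u)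
  have := nonempty_admissible hU
  calc hjValue U f h x
      = ⨅ u : {u : ℕ → (Fin n → ℝ) // ∀ t, u t ∈ U},
          max (h x) (hjCost f h (f x (u.1 0)) (fun t => u.1 (t + 1))) :=
        iInf_congr fun u => hjCost_eq_max f hh x u.1
    _ = max (h x) (⨅ u : {u : ℕ → (Fin n → ℝ) // ∀ t, u t ∈ U},
          hjCost f h (f x (u.1 0)) (fun t => u.1 (t + 1))) :=
        (Monotone.map_ciInf_of_continuousAt (continuous_const.max continuous_id).continuousAt
          (fun _ _ => max_le_max_left (h x)) ⟨-C, by rintro _ ⟨u, rfl⟩; exact hcost_ge _ _⟩).symm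
    _ = max (h x) (sInf ((fun u => hjValue U f h (f x u)) '' U)) := by
        rw [ciInf_head_tail_eq_csInf_image hU fun a v => hcost_ge (f x a) v]
        rfl
end
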